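/- arXiv:math/0201104 — 2 statements merged into one kernel-verified Lean document; each statement's English description precedes it below -/
import Mathlib

section
/- If the triple (A, B_•, C_•) lies in the orbit F_{M,Δ} for a decorated matrix (M,Δ), then for all (i,j) ∈ [0,q]×[0,r] one has dim(B_i ∩ C_j) = r_{ij}(M) and dim(B_i ∩ C_j) + dim(A ∩ (B_i + C_j)) = r_{ij}(M) + δ_{ij}(Δ). -/
/-! In a basis `v_{ijk}` adapted to the orbit, `B i`, `C j` and `B i + C j` are spanned by the
subfamilies of basis vectors in the rows `≤ i`, in the columns `≤ j`, and in their union. Spans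
of subfamilies of a linearly independent family intersect in the span of the common subfamily,
so `B i ∩ C j` is spanned by the `r_{ij}(M)` basis vectors of the cells `(k, l) ≤ (i, j)`. The
line `A` is spanned by `w = Σ_{(k,l) ∈ Δ} v_{kl1}`, which lies in the span of a subfamily exactly
when each of its summands does; so `A ⊆ B i + C j` when `δ_{ij}(Δ) = 1`, and
`A ∩ (B i + C j) = 0` otherwise. -/

open Finset

namespace TwoFlagsLine

/-- Rank numbers `r_{ij}(M) = Σ_{k ≤ i, l ≤ j} m_{kl}` (1-based; zero if `i = 0` or `j = 0`). -/
def rk (m : ℕ → ℕ → ℕ) (i j : ℕ) : ℕ :=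
  ∑ k ∈ Finset.Icc 1 i, ∑ l ∈ Finset.Icc 1 j, m k l

/-- `b` is a composition of `n` with `q` parts `b 1, …, b q`. -/
def IsComposition (n q : ℕ) (b : ℕ → ℕ) : Prop :=
  (∀ i ∈ Finset.Icc 1 q, 0 < b i) ∧ ∑ i ∈ Finset.Icc 1 q, b i = n

/-- `m` is a `q × r` transport matrix for the compositions `b`, `c`. -/
def IsTransport (q r : ℕ) (b c : ℕ → ℕ) (m : ℕ → ℕ → ℕ) : Prop :=
  (∀ i j : ℕ, i ∉ Finset.Icc 1 q ∨ j ∉ Finset.Icc 1 r → m i j = 0) ∧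
  (∀ i ∈ Finset.Icc 1 q, ∑ j ∈ Finset.Icc 1 r, m i j = b i) ∧
  (∀ j ∈ Finset.Icc 1 r, ∑ i ∈ Finset.Icc 1 q, m i j = c j)

/-- `Δ` is a decoration of the matrix `m`. -/
def IsDecoration (q r : ℕ) (m : ℕ → ℕ → ℕ) (Δ : Finset (ℕ × ℕ)) : Prop :=
  Δ.Nonempty ∧
  (∀ p ∈ Δ, 1 ≤ p.1 ∧ p.1 ≤ q ∧ 1 ≤ p.2 ∧ p.2 ≤ r ∧ 0 < m p.1 p.2) ∧
  (∀ p ∈ Δ, ∀ p' ∈ Δ, p ≠ p' → (p.1 < p'.1 ∧ p'.2 < p.2) ∨ (p'.1 < p.1 ∧ p.2 < p'.2))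

/-- `δ_{ij}(Δ) = 1` if every `(k,l) ∈ Δ` has `k ≤ i` or `l ≤ j`, else `0`. -/
def deltaNum (Δ : Finset (ℕ × ℕ)) (i j : ℕ) : ℕ :=
  if ∀ p ∈ Δ, p.1 ≤ i ∨ p.2 ≤ j then 1 else 0

/-- `[S]` : the set of `≤`-maximal elements of `S`. -/
def maxl (S : Finset (ℕ × ℕ)) : Finset (ℕ × ℕ) :=
  S.filter fun p => ∀ p' ∈ S, p ≤ p' → p = p'

/-- The index set `{(i,j,k) : (i,j) ∈ [1,q] × [1,r], 1 ≤ k ≤ m i j}` for a basis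
adapted to the transport matrix `m`. -/
def Idx (q r : ℕ) (m : ℕ → ℕ → ℕ) : Set (ℕ × ℕ × ℕ) :=
  {p | 1 ≤ p.1 ∧ p.1 ≤ q ∧ 1 ≤ p.2.1 ∧ p.2.1 ≤ r ∧ 1 ≤ p.2.2 ∧ p.2.2 ≤ m p.1 p.2.1}

variable (k V : Type*) [Field k] [AddCommGroup V] [Module k V]

/-- The family `v`, restricted to the index set of the transport matrix `m`,
is a basis of `V` indexed by `m`. -/
def IsMBasis (q r : ℕ) (m : ℕ → ℕ → ℕ) (v : ℕ × ℕ × ℕ → V) : Prop :=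
  LinearIndependent k (fun x : Idx q r m => v x.1) ∧
  Submodule.span k (v '' Idx q r m) = ⊤

/-- `(B, C)` lies in the orbit `F_M`: for some basis `v` indexed by `M`,
`B i = span{v_{i'jk} : i' ≤ i}` and `C j = span{v_{ij'k} : j' ≤ j}`. -/
def InOrbit (q r : ℕ) (m : ℕ → ℕ → ℕ) (B C : ℕ → Submodule k V) : Prop :=
  ∃ v : ℕ × ℕ × ℕ → V, IsMBasis k V q r m v ∧
    (∀ i ≤ q, B i = Submodule.span k (v '' {p | p ∈ Idx q r m ∧ p.1 ≤ i})) ∧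
    (∀ j ≤ r, C j = Submodule.span k (v '' {p | p ∈ Idx q r m ∧ p.2.1 ≤ j}))

/-- `(A, B, C)` lies in the orbit `F_{M,Δ}`: for some basis `v` indexed by `M`,
`B, C` are as in `F_M` and `A = span(Σ_{(i,j) ∈ Δ} v_{ij1})`. -/
def InOrbitDec (q r : ℕ) (m : ℕ → ℕ → ℕ) (Δ : Finset (ℕ × ℕ))
    (A : Submodule k V) (B C : ℕ → Submodule k V) : Prop :=
  ∃ v : ℕ × ℕ × ℕ → V, IsMBasis k V q r m v ∧
    (∀ i ≤ q, B i = Submodule.span k (v '' {p | p ∈ Idx q r m ∧ p.1 ≤ i})) ∧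
    (∀ j ≤ r, C j = Submodule.span k (v '' {p | p ∈ Idx q r m ∧ p.2.1 ≤ j})) ∧
    A = Submodule.span k {∑ p ∈ Δ, v (p.1, p.2, 1)}

/-- `B` is a partial flag `0 = B 0 ⊆ B 1 ⊆ ⋯ ⊆ B q = V` with
`dim (B i / B (i-1)) = b i`. -/
def IsFlag (q : ℕ) (b : ℕ → ℕ) (B : ℕ → Submodule k V) : Prop :=
  B 0 = ⊥ ∧ B q = ⊤ ∧ (∀ i : ℕ, 1 ≤ i → i ≤ q → B (i - 1) ≤ B i) ∧
  (∀ i : ℕ, 1 ≤ i → i ≤ q →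
    Module.finrank k (↥(B i) ⧸ Submodule.comap (B i).subtype (B (i - 1))) = b i)

section LinearIndepOn

variable {ι R M : Type*} [Ring R] [AddCommGroup M] [Module R M] {v : ι → M} {s t u : Set ι}

theorem _root_.LinearIndepOn.linearCombination_mem_span_image_iff (hv : LinearIndepOn R v s)
    (ht : t ⊆ s) {f : ι →₀ R} (hf : f ∈ Finsupp.supported R R s) :
    Finsupp.linearCombination R v f ∈ Submodule.span R (v '' t) ↔
      f ∈ Finsupp.supported R R t := by
  rw [Finsupp.mem_span_image_iff_linearCombination]
  constructor
  · rintro ⟨l, hl, hlf⟩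
    rwa [← linearIndepOn_iffₛ.1 hv l (Finsupp.supported_mono ht hl) f hf hlf]
  · exact fun hft => ⟨f, hft, rfl⟩

theorem _root_.LinearIndepOn.span_image_inf_span_image (hv : LinearIndepOn R v s)
    (ht : t ⊆ s) (hu : u ⊆ s) :
    Submodule.span R (v '' t) ⊓ Submodule.span R (v '' u) = Submodule.span R (v '' (t ∩ u)) := by
  refine le_antisymm (fun x ⟨hxt, hxu⟩ => ?_)
    (le_inf (Submodule.span_mono (Set.image_mono Set.inter_subset_left))
      (Submodule.span_mono (Set.image_mono Set.inter_subset_right)))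
  obtain ⟨l, hlt, rfl⟩ := (Finsupp.mem_span_image_iff_linearCombination R).1 hxt
  have hlu := (hv.linearCombination_mem_span_image_iff hu (Finsupp.supported_mono ht hlt)).1 hxu
  rw [Finsupp.mem_span_image_iff_linearCombination, Finsupp.supported_inter]
  exact ⟨l, ⟨hlt, hlu⟩, rfl⟩

theorem _root_.LinearIndepOn.sum_mem_span_image_iff [Nontrivial R] (hv : LinearIndepOn R v s)
    (ht : t ⊆ s) {D : Finset ι} (hD : ↑D ⊆ s) :
    ∑ x ∈ D, v x ∈ Submodule.span R (v '' t) ↔ ↑D ⊆ t := by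
  classical
  set f : ι →₀ R := ∑ x ∈ D, Finsupp.single x 1
  have hf_apply (x : ι) : f x = if x ∈ D then 1 else 0 := by
    simp [f, Finsupp.finsetSum_apply, Finsupp.single_apply]
  have hf_supported {w : Set ι} : f ∈ Finsupp.supported R R w ↔ ↑D ⊆ w := by
    simp only [Finsupp.mem_supported', hf_apply, ite_eq_right_iff, one_ne_zero, imp_false]
    exact forall_congr' fun _ => not_imp_not
  have hf_sum : Finsupp.linearCombination R v f = ∑ x ∈ D, v x := by
    simp [f, map_sum]
  rw [← hf_sum, hv.linearCombination_mem_span_image_iff ht (hf_supported.2 hD), hf_supported]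

theorem _root_.LinearIndepOn.finrank_span_image_finset [StrongRankCondition R]
    (hv : LinearIndepOn R v s) {T : Finset ι} (hT : ↑T ⊆ s) :
    Module.finrank R (Submodule.span R (v '' T)) = T.card := by
  have := nontrivial_of_invariantBasisNumber R
  rw [Set.image_eq_range, finrank_span_eq_card (hv.mono hT)]
  simp

end LinearIndepOn

theorem _root_.Submodule.finrank_span_singleton_inf {K V : Type*} [DivisionRing K]
    [AddCommGroup V] [Module K V] {w : V} (hw : w ≠ 0) (W : Submodule K V) [Decidable (w ∈ W)] :
    Module.finrank K ↥(K ∙ w ⊓ W) = if w ∈ W then 1 else 0 := by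
  split_ifs with hwW
  · rw [inf_eq_left.2 ((Submodule.span_singleton_le_iff_mem w W).2 hwW),
      finrank_span_singleton hw]
  · rw [disjoint_iff.1 ((Submodule.disjoint_span_singleton' hw).2 hwW).symm, finrank_bot]

def idxBox (m : ℕ → ℕ → ℕ) (i j : ℕ) : Finset (ℕ × ℕ × ℕ) :=
  ((Icc 1 i ×ˢ Icc 1 j).sigma fun p => Icc 1 (m p.1 p.2)).image fun x => (x.1.1, x.1.2, x.2)

theorem card_idxBox (m : ℕ → ℕ → ℕ) (i j : ℕ) : (idxBox m i j).card = rk m i j := by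
  rw [idxBox, Finset.card_image_of_injective, Finset.card_sigma, rk, Finset.sum_product]
  · simp
  · rintro ⟨⟨a, b⟩, c⟩ ⟨⟨a', b'⟩, c'⟩ h
    obtain ⟨rfl, rfl, rfl⟩ : a = a' ∧ b = b' ∧ c = c' := by simpa using h
    rfl

theorem coe_idxBox {q r : ℕ} (m : ℕ → ℕ → ℕ) {i j : ℕ} (hi : i ≤ q) (hj : j ≤ r) :
    (↑(idxBox m i j) : Set (ℕ × ℕ × ℕ)) =
      {p | p ∈ Idx q r m ∧ p.1 ≤ i} ∩ {p | p ∈ Idx q r m ∧ p.2.1 ≤ j} := by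
  ext ⟨a, b, c⟩
  simp only [idxBox, coe_image, coe_sigma, coe_product, coe_Icc, Set.Icc_prod_Icc, Set.mem_image,
    Set.mem_sigma_iff, Set.mem_Icc, Prod.mk.injEq, Sigma.exists, existsAndEq, and_true,
    Prod.exists, Prod.mk_le_mk, exists_eq_right_right, exists_eq_right, Idx, Set.mem_ofPred_eq,
    Set.mem_inter_iff]
  omega

def decorationIdx (Δ : Finset (ℕ × ℕ)) : Finset (ℕ × ℕ × ℕ) :=
  Δ.image fun p => (p.1, p.2, 1)

theorem coe_decorationIdx_subset {q r : ℕ} {m : ℕ → ℕ → ℕ} {Δ : Finset (ℕ × ℕ)}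
    (hΔ : IsDecoration q r m Δ) : ↑(decorationIdx Δ) ⊆ Idx q r m := by
  simp only [decorationIdx, Finset.coe_image, Set.image_subset_iff]
  intro p hp
  obtain ⟨h1, h2, h3, h4, h5⟩ := hΔ.2.1 p hp
  exact ⟨h1, h2, h3, h4, le_rfl, h5⟩

theorem sum_decorationIdx {V : Type*} [AddCommMonoid V] (v : ℕ × ℕ × ℕ → V)
    (Δ : Finset (ℕ × ℕ)) : ∑ x ∈ decorationIdx Δ, v x = ∑ p ∈ Δ, v (p.1, p.2, 1) :=
  Finset.sum_image fun p _ p' _ h => by simpa [Prod.ext_iff] using h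

section AdaptedBasis

variable {K W : Type*} [Field K] [AddCommGroup W] [Module K W] {q r : ℕ} {m : ℕ → ℕ → ℕ}
  {v : ℕ × ℕ × ℕ → W}

theorem finrank_span_inf_span_eq_rk (hv : LinearIndepOn K v (Idx q r m)) {i j : ℕ}
    (hi : i ≤ q) (hj : j ≤ r) :
    Module.finrank K ↥(Submodule.span K (v '' {p | p ∈ Idx q r m ∧ p.1 ≤ i}) ⊓
      Submodule.span K (v '' {p | p ∈ Idx q r m ∧ p.2.1 ≤ j})) = rk m i j := by
  have hrow := Set.sep_subset (Idx q r m) fun p => p.1 ≤ i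
  rw [hv.span_image_inf_span_image hrow (Set.sep_subset _ _), ← coe_idxBox m hi hj,
    hv.finrank_span_image_finset (coe_idxBox m hi hj ▸ Set.inter_subset_left.trans hrow),
    card_idxBox]

theorem decoration_sum_mem_span_sup_iff (hv : LinearIndepOn K v (Idx q r m))
    {Δ : Finset (ℕ × ℕ)} (hΔ : IsDecoration q r m Δ) (i j : ℕ) :
    ∑ p ∈ Δ, v (p.1, p.2, 1) ∈ Submodule.span K (v '' {p | p ∈ Idx q r m ∧ p.1 ≤ i}) ⊔
        Submodule.span K (v '' {p | p ∈ Idx q r m ∧ p.2.1 ≤ j}) ↔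
      ∀ p ∈ Δ, p.1 ≤ i ∨ p.2 ≤ j := by
  rw [← Submodule.span_union, ← Set.image_union, ← sum_decorationIdx,
    hv.sum_mem_span_image_iff (Set.union_subset (Set.sep_subset _ _) (Set.sep_subset _ _))
      (coe_decorationIdx_subset hΔ)]
  simp only [decorationIdx, Finset.coe_image, Set.image_subset_iff]
  refine forall₂_congr fun p hp => ?_
  have hpIdx := coe_decorationIdx_subset hΔ (Finset.mem_image_of_mem _ hp)
  simp [hpIdx]

theorem decoration_sum_ne_zero (hv : LinearIndepOn K v (Idx q r m)) {Δ : Finset (ℕ × ℕ)}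
    (hΔ : IsDecoration q r m Δ) : ∑ p ∈ Δ, v (p.1, p.2, 1) ≠ 0 := by
  rw [Ne, ← Submodule.mem_bot K, ← Submodule.span_empty, ← Set.image_empty v,
    ← sum_decorationIdx, hv.sum_mem_span_image_iff (Set.empty_subset _)
      (coe_decorationIdx_subset hΔ)]
  simpa [decorationIdx] using hΔ.1.ne_empty

end AdaptedBasis

theorem decorated_orbit_rank_general (q r : ℕ)
    {k V : Type*} [Field k] [AddCommGroup V] [Module k V]
    (m : ℕ → ℕ → ℕ) (Δ : Finset (ℕ × ℕ))
    (hΔ : IsDecoration q r m Δ)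
    (A : Submodule k V) (B C : ℕ → Submodule k V)
    (horb : InOrbitDec k V q r m Δ A B C) :
    ∀ i ≤ q, ∀ j ≤ r,
      Module.finrank k ↥(B i ⊓ C j) = rk m i j ∧
      Module.finrank k ↥(B i ⊓ C j) + Module.finrank k ↥(A ⊓ (B i ⊔ C j)) =
        rk m i j + deltaNum Δ i j := by
  classical
  obtain ⟨v, ⟨hv, -⟩, hB, hC, rfl⟩ := horb
  intro i hi j hj
  rw [hB i hi, hC j hj, finrank_span_inf_span_eq_rk hv hi hj,
    Submodule.finrank_span_singleton_inf (decoration_sum_ne_zero hv hΔ), deltaNum]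
  exact ⟨rfl, by simp only [decoration_sum_mem_span_sup_iff hv hΔ]⟩

/-- if `(A, B, C) ∈ F_{M,Δ}` for a decorated matrix `(M,Δ)`, then for all
`(i,j) ∈ [0,q] × [0,r]`, `dim (B i ∩ C j) = r_{ij}(M)` and
`dim (B i ∩ C j) + dim (A ∩ (B i + C j)) = r_{ij}(M) + δ_{ij}(Δ)`. -/
theorem decorated_orbit_rank (n q r : ℕ) (hn : 0 < n) (hq : 0 < q) (hr : 0 < r)
    (b c : ℕ → ℕ) (hb : IsComposition n q b) (hc : IsComposition n r c)
    {k V : Type*} [Field k] [Infinite k] [AddCommGroup V] [Module k V]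
    [FiniteDimensional k V] (hdim : Module.finrank k V = n)
    (m : ℕ → ℕ → ℕ) (Δ : Finset (ℕ × ℕ))
    (hm : IsTransport q r b c m) (hΔ : IsDecoration q r m Δ)
    (A : Submodule k V) (B C : ℕ → Submodule k V)
    (horb : InOrbitDec k V q r m Δ A B C) :
    ∀ i ≤ q, ∀ j ≤ r,
      Module.finrank k ↥(B i ⊓ C j) = rk m i j ∧
      Module.finrank k ↥(B i ⊓ C j) + Module.finrank k ↥(A ⊓ (B i ⊔ C j)) =
        rk m i j + deltaNum Δ i j :=
  decorated_orbit_rank_general q r m Δ hΔ A B C horb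

end TwoFlagsLine
end

section
/- Let M and M' be transport matrices with M ≤_rk M' and M ≠ M'. Then there exist a rectangle R and a transport matrix M̃ such that M →_R M̃ is a simple move and M̃ ≤_rk M'. -/
open Finset

namespace TwoFlagsLine

/-- The matrix `M - E_{i0 j0} - E_{i1 j1} + E_{i0 j1} + E_{i1 j0}`. -/
def moveMat (m : ℕ → ℕ → ℕ) (i0 j0 i1 j1 : ℕ) : ℕ → ℕ → ℕ :=
  fun i j =>
    if (i, j) = (i0, j0) ∨ (i, j) = (i1, j1) then m i j - 1
    else if (i, j) = (i0, j1) ∨ (i, j) = (i1, j0) then m i j + 1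
    else m i j

/-- The simple move `M →_R M'` at the rectangle `R = [i0,i1] × [j0,j1]`. -/
def IsSimpleMoveAt (m m' : ℕ → ℕ → ℕ) (i0 j0 i1 j1 : ℕ) : Prop :=
  i0 < i1 ∧ j0 < j1 ∧ 0 < m i0 j0 ∧ 0 < m i1 j1 ∧
  (∀ i j : ℕ, i0 ≤ i → i ≤ i1 → j0 ≤ j → j ≤ j1 →
    (i, j) ≠ (i0, j0) → (i, j) ≠ (i1, j1) → (i, j) ≠ (i0, j1) → (i, j) ≠ (i1, j0) →
    m i j = 0) ∧
  m' = moveMat m i0 j0 i1 j1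

/-- Rank order `M ≤rk M'` : `r_{ij}(M) ≥ r_{ij}(M')` for all `(i,j) ∈ [0,q] × [0,r]`. -/
def RkLE (q r : ℕ) (m m' : ℕ → ℕ → ℕ) : Prop :=
  ∀ i ≤ q, ∀ j ≤ r, rk m' i j ≤ rk m i j

/-- A single simple move at some rectangle inside the matrix. -/
def MoveRel (q r : ℕ) (m m' : ℕ → ℕ → ℕ) : Prop :=
  ∃ i0 j0 i1 j1 : ℕ, 1 ≤ i0 ∧ i1 ≤ q ∧ 1 ≤ j0 ∧ j1 ≤ r ∧
    IsSimpleMoveAt m m' i0 j0 i1 j1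

/-- Move order: reflexive–transitive closure of simple moves. -/
def MoveLE (q r : ℕ) (m m' : ℕ → ℕ → ℕ) : Prop :=
  Relation.ReflTransGen (MoveRel q r) m m'

/-- `(i,j) ≤ Δ` : some element of `Δ` lies weakly southeast of `p`. -/
def Below (p : ℕ × ℕ) (Δ : Finset (ℕ × ℕ)) : Prop := ∃ p' ∈ Δ, p ≤ p'

/-- Decorated rank numbers `r̄_{ij}(M,Δ) = r_{ij}(M) + δ_{ij}(Δ)`. -/
def rkBar (m : ℕ → ℕ → ℕ) (Δ : Finset (ℕ × ℕ)) (i j : ℕ) : ℕ :=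
  rk m i j + deltaNum Δ i j

/-- Decorated rank order `(M,Δ) ≤rk (M',Δ')`. -/
def DecRkLE (q r : ℕ) (m : ℕ → ℕ → ℕ) (Δ : Finset (ℕ × ℕ))
    (m' : ℕ → ℕ → ℕ) (Δ' : Finset (ℕ × ℕ)) : Prop :=
  ∀ i ≤ q, ∀ j ≤ r, rk m' i j ≤ rk m i j ∧ rkBar m' Δ' i j ≤ rkBar m Δ i j

/-- Simple move (i). -/
def MoveI (m : ℕ → ℕ → ℕ) (Δ : Finset (ℕ × ℕ))
    (m' : ℕ → ℕ → ℕ) (Δ' : Finset (ℕ × ℕ)) : Prop :=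
  ∃ i1 j1 : ℕ, ¬ Below (i1, j1) Δ ∧ 0 < m i1 j1 ∧
    (∀ i j : ℕ, ((i, j) : ℕ × ℕ) < (i1, j1) → ¬ Below (i, j) Δ → m i j = 0) ∧
    m' = m ∧ Δ' = maxl (Δ ∪ {(i1, j1)})

/-- Simple move (ii). -/
def MoveII (m : ℕ → ℕ → ℕ) (Δ : Finset (ℕ × ℕ))
    (m' : ℕ → ℕ → ℕ) (Δ' : Finset (ℕ × ℕ)) : Prop :=
  ∃ i0 j0 i1 j1 : ℕ, i0 < i1 ∧ j0 < j1 ∧ 0 < m i0 j0 ∧ 0 < m i1 j1 ∧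
    (∀ i j : ℕ, ((i0, j0) : ℕ × ℕ) < (i, j) → ((i, j) : ℕ × ℕ) < (i1, j1) →
      (i, j) ≠ (i0, j1) → (i, j) ≠ (i1, j0) → m i j = 0) ∧
    (i1, j1) ∉ Δ ∧ ¬((i0, j1) ∈ Δ ∧ (i1, j0) ∈ Δ) ∧
    ((i0, j0) ∉ Δ ∨ 1 < m i0 j0) ∧
    m' = moveMat m i0 j0 i1 j1 ∧ Δ' = Δ

/-- Simple move (iii)(a). -/
def MoveIIIa (m : ℕ → ℕ → ℕ) (Δ : Finset (ℕ × ℕ))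
    (m' : ℕ → ℕ → ℕ) (Δ' : Finset (ℕ × ℕ)) : Prop :=
  ∃ i0 j0 i1 j1 : ℕ, i0 < i1 ∧ j0 < j1 ∧ (i0, j0) ∈ Δ ∧ m i0 j0 = 1 ∧ 0 < m i1 j1 ∧
    (∀ i j : ℕ, ((i0, j0) : ℕ × ℕ) < (i, j) → ((i, j) : ℕ × ℕ) < (i1, j1) →
      (i, j) ≠ (i1, j0) → m i j = 0) ∧
    (∀ i j : ℕ, ((i, j) : ℕ × ℕ) ≤ (i0, j1) → ¬ Below (i, j) Δ → m i j = 0) ∧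
    m' = moveMat m i0 j0 i1 j1 ∧ Δ' = maxl (Δ ∪ {(i0, j1)})

/-- Simple move (iii)(b). -/
def MoveIIIb (m : ℕ → ℕ → ℕ) (Δ : Finset (ℕ × ℕ))
    (m' : ℕ → ℕ → ℕ) (Δ' : Finset (ℕ × ℕ)) : Prop :=
  ∃ i0 j0 i1 j1 : ℕ, i0 < i1 ∧ j0 < j1 ∧ (i0, j0) ∈ Δ ∧ m i0 j0 = 1 ∧ 0 < m i1 j1 ∧
    (∀ i j : ℕ, ((i0, j0) : ℕ × ℕ) < (i, j) → ((i, j) : ℕ × ℕ) < (i1, j1) →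
      (i, j) ≠ (i0, j1) → m i j = 0) ∧
    (∀ i j : ℕ, ((i, j) : ℕ × ℕ) ≤ (i1, j0) → ¬ Below (i, j) Δ → m i j = 0) ∧
    m' = moveMat m i0 j0 i1 j1 ∧ Δ' = maxl (Δ ∪ {(i1, j0)})

/-- Simple move (iv)(a). -/
def MoveIVa (m : ℕ → ℕ → ℕ) (Δ : Finset (ℕ × ℕ))
    (m' : ℕ → ℕ → ℕ) (Δ' : Finset (ℕ × ℕ)) : Prop :=
  ∃ i0 i2 i1 j2 j0 j1 : ℕ, i0 < i2 ∧ i2 < i1 ∧ j2 < j0 ∧ j0 < j1 ∧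
    (i0, j0) ∈ Δ ∧ (i2, j2) ∈ Δ ∧ m i0 j0 = 1 ∧ m i2 j2 = 1 ∧ 0 < m i1 j1 ∧
    (∀ i j : ℕ, ((i0, j2) : ℕ × ℕ) < (i, j) → ((i, j) : ℕ × ℕ) < (i1, j1) →
      ¬ Below (i, j) Δ → (i, j) ≠ (i0, j1) → (i, j) ≠ (i1, j2) → m i j = 0) ∧
    m' = (fun i j =>
      if (i, j) = (i0, j0) ∨ (i, j) = (i1, j1) ∨ (i, j) = (i2, j2) then m i j - 1
      else if (i, j) = (i1, j2) ∨ (i, j) = (i2, j0) ∨ (i, j) = (i0, j1) then m i j + 1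
      else m i j) ∧
    Δ' = maxl (Δ ∪ {(i2, j0)})

/-- Simple move (iv)(b). -/
def MoveIVb (m : ℕ → ℕ → ℕ) (Δ : Finset (ℕ × ℕ))
    (m' : ℕ → ℕ → ℕ) (Δ' : Finset (ℕ × ℕ)) : Prop :=
  ∃ i0 i2 i1 j0 j1 : ℕ, i0 < i2 ∧ i2 < i1 ∧ j0 < j1 ∧
    0 < m i0 j0 ∧ 0 < m i1 j1 ∧ (i2, j0) ∈ Δ ∧ m i2 j0 = 1 ∧ ¬ Below (i0, j1) Δ ∧
    (∀ i j : ℕ, ((i0, j0) : ℕ × ℕ) < (i, j) → ((i, j) : ℕ × ℕ) < (i1, j1) →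
      (i, j) ≠ (i0, j1) → (i, j) ≠ (i1, j0) → (i, j) ≠ (i2, j0) → m i j = 0) ∧
    m' = moveMat m i0 j0 i1 j1 ∧ Δ' = Δ

/-- Simple move (iv)(c). -/
def MoveIVc (m : ℕ → ℕ → ℕ) (Δ : Finset (ℕ × ℕ))
    (m' : ℕ → ℕ → ℕ) (Δ' : Finset (ℕ × ℕ)) : Prop :=
  ∃ i0 i1 j0 j2 j1 : ℕ, i0 < i1 ∧ j0 < j2 ∧ j2 < j1 ∧
    0 < m i0 j0 ∧ 0 < m i1 j1 ∧ (i0, j2) ∈ Δ ∧ m i0 j2 = 1 ∧ ¬ Below (i1, j0) Δ ∧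
    (∀ i j : ℕ, ((i0, j0) : ℕ × ℕ) < (i, j) → ((i, j) : ℕ × ℕ) < (i1, j1) →
      (i, j) ≠ (i0, j1) → (i, j) ≠ (i1, j0) → (i, j) ≠ (i0, j2) → m i j = 0) ∧
    m' = moveMat m i0 j0 i1 j1 ∧ Δ' = Δ

/-- Simple move (v), with circled positions `(I 1, J 1), …, (I t, J t)` and
`(i0, j0) = (I 0, J 0)`. -/
def MoveV (m : ℕ → ℕ → ℕ) (Δ : Finset (ℕ × ℕ))
    (m' : ℕ → ℕ → ℕ) (Δ' : Finset (ℕ × ℕ)) : Prop :=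
  ∃ (t : ℕ) (I J : ℕ → ℕ), 1 ≤ t ∧
    (∀ s : ℕ, 1 ≤ s → s ≤ t → I (s - 1) < I s) ∧
    (∀ s : ℕ, 1 ≤ s → s < t → J (s + 1) < J s) ∧
    J 0 < J t ∧
    (∀ s : ℕ, 1 ≤ s → s ≤ t → (I s, J s) ∈ Δ) ∧
    0 < m (I 0) (J 0) ∧
    (∀ i j s : ℕ, 1 ≤ s → s ≤ t →
      ((I 0, J 0) : ℕ × ℕ) < (i, j) → i ≤ I s - 1 → j ≤ J s - 1 → m i j = 0) ∧
    m' = (fun i j =>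
      if (i, j) = (I 0, J 1) ∨ (i, j) = (I t, J 0) then m i j + 1
      else if (i, j) ∈ (Finset.range (t + 1)).image (fun s => (I s, J s)) then m i j - 1
      else m i j) ∧
    Δ' = (Δ \ (Finset.range (t + 1)).image (fun s => (I s, J s))) ∪ {(I 0, J 1), (I t, J 0)}

/-- One of the simple moves (i)–(v) on decorated matrices. -/
def MoveRelDec (m : ℕ → ℕ → ℕ) (Δ : Finset (ℕ × ℕ))
    (m' : ℕ → ℕ → ℕ) (Δ' : Finset (ℕ × ℕ)) : Prop :=
  MoveI m Δ m' Δ' ∨ MoveII m Δ m' Δ' ∨ MoveIIIa m Δ m' Δ' ∨ MoveIIIb m Δ m' Δ' ∨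
  MoveIVa m Δ m' Δ' ∨ MoveIVb m Δ m' Δ' ∨ MoveIVc m Δ m' Δ' ∨ MoveV m Δ m' Δ'

/-- Decorated move order: reflexive–transitive closure of the simple moves (i)–(v). -/
def DecMoveLE (m : ℕ → ℕ → ℕ) (Δ : Finset (ℕ × ℕ))
    (m' : ℕ → ℕ → ℕ) (Δ' : Finset (ℕ × ℕ)) : Prop :=
  Relation.ReflTransGen
    (fun x y : (ℕ → ℕ → ℕ) × Finset (ℕ × ℕ) => MoveRelDec x.1 x.2 y.1 y.2) (m, Δ) (m', Δ')

/-! Call a rectangle `[a0, a1] × [b0, b1]` admissible if its corners `(a0, b0)`, `(a1, b1)` carry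
positive entries of `m` and the rank numbers of `m` strictly exceed those of `m'` on the half-open
part `[a0, a1) × [b0, b1)`. Moving `m` at it lowers the rank numbers by one exactly there, so the
result stays above `m'`. An admissible rectangle is found greedily from the first entry where `m`
and `m'` differ: extend it down the column until the rank numbers agree, then to the right until
they agree somewhere on the rows covered; comparing the masses of `m` and `m'` in the last strip
forces a positive entry of `m` in it. An admissible rectangle of minimal perimeter has no positive
entry besides its corners, so it is a simple move. -/

lemma rk_eq_sum_Ioc (m : ℕ → ℕ → ℕ) (i j : ℕ) :
    rk m i j = ∑ k ∈ Ioc 0 i, ∑ l ∈ Ioc 0 j, m k l := by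
  simp only [rk, ← Finset.Icc_add_one_left_eq_Ioc, zero_add]

lemma rk_congr {m m' : ℕ → ℕ → ℕ} {i j : ℕ}
    (h : ∀ k ∈ Icc 1 i, ∀ l ∈ Icc 1 j, m k l = m' k l) : rk m i j = rk m' i j :=
  Finset.sum_congr rfl fun k hk => Finset.sum_congr rfl fun l hl => h k hk l hl

lemma rk_add_rk (m : ℕ → ℕ → ℕ) {i i' j j' : ℕ} (hi : i ≤ i') (hj : j ≤ j') :
    rk m i' j' + rk m i j =
      rk m i j' + rk m i' j + ∑ k ∈ Ioc i i', ∑ l ∈ Ioc j j', m k l := by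
  simp only [rk_eq_sum_Ioc, ← Finset.sum_Ioc_consecutive _ (Nat.zero_le i) hi,
    ← Finset.sum_Ioc_consecutive _ (Nat.zero_le j) hj, Finset.sum_add_distrib]
  ring

lemma rk_succ_succ (m : ℕ → ℕ → ℕ) (i j : ℕ) :
    rk m (i + 1) (j + 1) + rk m i j = rk m i (j + 1) + rk m (i + 1) j + m (i + 1) (j + 1) := by
  simpa only [Nat.Ioc_succ_singleton, Finset.sum_singleton] using
    rk_add_rk m (Nat.le_succ i) (Nat.le_succ j)

lemma exists_pos_of_rk_lt {m m' : ℕ → ℕ → ℕ} {i i' j j' : ℕ} (hi : i ≤ i') (hj : j ≤ j')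
    (hle : rk m' i' j' ≤ rk m i' j') (hlt : rk m' i j < rk m i j)
    (hne_corner : rk m i j' = rk m' i j') (hsw_corner : rk m i' j = rk m' i' j) :
    ∃ k ∈ Ioc i i', ∃ l ∈ Ioc j j', 0 < m k l := by
  have := rk_add_rk m hi hj
  have := rk_add_rk m' hi hj
  have hmass : 0 < ∑ k ∈ Ioc i i', ∑ l ∈ Ioc j j', m k l := by omega
  simpa only [Finset.sum_pos_iff] using hmass

section moveMat

variable {m : ℕ → ℕ → ℕ} {a0 b0 a1 b1 : ℕ}

-- Stated with the corrections on both sides because `moveMat` subtracts in `ℕ`.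
lemma moveMat_add_ite (ha : a0 ≠ a1) (hb : b0 ≠ b1) (h0 : 0 < m a0 b0) (h1 : 0 < m a1 b1)
    (p : ℕ × ℕ) :
    moveMat m a0 b0 a1 b1 p.1 p.2
        + ((if p = (a0, b0) then 1 else 0) + (if p = (a1, b1) then 1 else 0)) =
      m p.1 p.2 + ((if p = (a0, b1) then 1 else 0) + (if p = (a1, b0) then 1 else 0)) := by
  obtain ⟨k, l⟩ := p
  unfold moveMat
  rcases eq_or_ne k a0 with rfl | e1 <;> rcases eq_or_ne l b0 with rfl | e3 <;>
    rcases eq_or_ne k a1 with rfl | e2 <;> rcases eq_or_ne l b1 with rfl | e4 <;>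
    simp_all <;> omega

lemma sum_sum_moveMat_add (ha : a0 ≠ a1) (hb : b0 ≠ b1) (h0 : 0 < m a0 b0) (h1 : 0 < m a1 b1)
    (s t : Finset ℕ) :
    ∑ k ∈ s, ∑ l ∈ t, moveMat m a0 b0 a1 b1 k l
        + ((if a0 ∈ s ∧ b0 ∈ t then 1 else 0) + (if a1 ∈ s ∧ b1 ∈ t then 1 else 0)) =
      ∑ k ∈ s, ∑ l ∈ t, m k l
        + ((if a0 ∈ s ∧ b1 ∈ t then 1 else 0) + (if a1 ∈ s ∧ b0 ∈ t then 1 else 0)) := by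
  have := Finset.sum_congr (s₁ := s ×ˢ t) rfl fun p _ => moveMat_add_ite ha hb h0 h1 p
  simpa only [Finset.sum_add_distrib, Finset.sum_ite_eq', Finset.mem_product,
    Finset.sum_product] using this

lemma rk_moveMat_add (ha0 : 1 ≤ a0) (hb0 : 1 ≤ b0) (ha : a0 < a1) (hb : b0 < b1)
    (h0 : 0 < m a0 b0) (h1 : 0 < m a1 b1) (i j : ℕ) :
    rk (moveMat m a0 b0 a1 b1) i j + (if a0 ≤ i ∧ i < a1 ∧ b0 ≤ j ∧ j < b1 then 1 else 0) =
      rk m i j := by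
  have := sum_sum_moveMat_add ha.ne hb.ne h0 h1 (Icc 1 i) (Icc 1 j)
  simp only [Finset.mem_Icc] at this
  unfold rk
  split_ifs at this ⊢ <;> omega

lemma IsTransport.moveMat {q r : ℕ} {b c : ℕ → ℕ} (hm : IsTransport q r b c m)
    (ha0 : a0 ∈ Icc 1 q) (ha1 : a1 ∈ Icc 1 q) (hb0 : b0 ∈ Icc 1 r) (hb1 : b1 ∈ Icc 1 r)
    (ha : a0 ≠ a1) (hb : b0 ≠ b1) (h0 : 0 < m a0 b0) (h1 : 0 < m a1 b1) :
    IsTransport q r b c (moveMat m a0 b0 a1 b1) := by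
  obtain ⟨hsupp, hrow, hcol⟩ := hm
  refine ⟨fun i j hij => ?_, fun i hi => ?_, fun j hj => ?_⟩
  · have hcorner : ∀ a ∈ Icc 1 q, ∀ b ∈ Icc 1 r, (i, j) ≠ (a, b) := by
      rintro a ha b hb ⟨⟩
      tauto
    simp only [TwoFlagsLine.moveMat, hcorner a0 ha0 b1 hb1, hcorner a1 ha1 b0 hb0,
      hcorner a0 ha0 b0 hb0, hcorner a1 ha1 b1 hb1, or_self, if_false, hsupp i j hij]
  · have := sum_sum_moveMat_add ha hb h0 h1 {i} (Icc 1 r)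
    simp only [Finset.sum_singleton, Finset.mem_singleton, hb0, hb1, and_true] at this
    rw [← hrow i hi]
    split_ifs at this <;> omega
  · have := sum_sum_moveMat_add ha hb h0 h1 (Icc 1 q) {j}
    simp only [Finset.sum_singleton, Finset.mem_singleton, ha0, ha1, true_and] at this
    rw [← hcol j hj]
    split_ifs at this <;> omega

end moveMat

section transport

variable {q r : ℕ} {b c : ℕ → ℕ} {m m' : ℕ → ℕ → ℕ}

lemma IsTransport.mem_of_pos (hm : IsTransport q r b c m) {i j : ℕ} (h : 0 < m i j) :
    i ∈ Icc 1 q ∧ j ∈ Icc 1 r := by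
  by_contra hij
  have := hm.1 i j (by tauto)
  omega

lemma IsTransport.rk_right (hm : IsTransport q r b c m) {i : ℕ} (hi : i ≤ q) :
    rk m i r = ∑ k ∈ Icc 1 i, b k :=
  Finset.sum_congr rfl fun k hk => hm.2.1 k (Finset.Icc_subset_Icc_right hi hk)

lemma IsTransport.rk_bottom (hm : IsTransport q r b c m) {j : ℕ} (hj : j ≤ r) :
    rk m q j = ∑ l ∈ Icc 1 j, c l := by
  rw [rk, Finset.sum_comm]
  exact Finset.sum_congr rfl fun l hl => hm.2.2 l (Finset.Icc_subset_Icc_right hj hl)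

lemma exists_pos_rk_lt_of_ne (hm : IsTransport q r b c m) (hm' : IsTransport q r b c m')
    (hle : RkLE q r m m') (hne : m ≠ m') : ∃ i j, 0 < m i j ∧ rk m' i j < rk m i j := by
  classical
  have hdiff : ∃ i j, m i j ≠ m' i j := by
    by_contra! h
    exact hne (funext₂ h)
  have hdiff_row := Nat.find_spec hdiff
  set i0 := Nat.find hdiff
  set j0 := Nat.find hdiff_row
  have hd : m i0 j0 ≠ m' i0 j0 := Nat.find_spec hdiff_row
  have hbounds : i0 ∈ Icc 1 q ∧ j0 ∈ Icc 1 r := by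
    by_contra hij
    exact hd ((hm.1 i0 j0 (by tauto)).trans (hm'.1 i0 j0 (by tauto)).symm)
  simp only [Finset.mem_Icc] at hbounds
  have habove : ∀ k < i0, ∀ l, m k l = m' k l := fun k hk l => by
    by_contra h
    exact Nat.find_min hdiff hk ⟨l, h⟩
  have hleft : ∀ l < j0, m i0 l = m' i0 l := fun l hl => by
    by_contra h
    exact Nat.find_min hdiff_row hl h
  obtain ⟨i, hi⟩ : ∃ i, i0 = i + 1 := ⟨i0 - 1, by omega⟩
  obtain ⟨j, hj⟩ : ∃ j, j0 = j + 1 := ⟨j0 - 1, by omega⟩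
  have e1 : rk m i (j + 1) = rk m' i (j + 1) := rk_congr fun k hk l _ =>
    habove k (by simp only [Finset.mem_Icc] at hk; omega) l
  have e2 : rk m (i + 1) j = rk m' (i + 1) j := rk_congr fun k hk l hl => by
    simp only [Finset.mem_Icc] at hk hl
    rcases Nat.lt_or_ge k i0 with hk' | hk'
    · exact habove k hk' l
    · obtain rfl : k = i0 := by omega
      exact hleft l (by omega)
  have e3 : rk m i j = rk m' i j := rk_congr fun k hk l _ =>
    habove k (by simp only [Finset.mem_Icc] at hk; omega) l
  have := rk_succ_succ m i j
  have := rk_succ_succ m' i j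
  have := hle (i + 1) (by omega) (j + 1) (by omega)
  rw [hi, hj] at hd
  exact ⟨i + 1, j + 1, by omega, by omega⟩

lemma exists_rk_lt_on_block (hm : IsTransport q r b c m) (hm' : IsTransport q r b c m')
    (hle : RkLE q r m m') {a0 b0 : ℕ} (h0 : 0 < m a0 b0) (hlt : rk m' a0 b0 < rk m a0 b0) :
    ∃ I J i, a0 ≤ i ∧ i < I ∧ I ≤ q ∧ b0 < J ∧ J ≤ r ∧
      rk m I b0 = rk m' I b0 ∧ rk m i J = rk m' i J ∧
      ∀ k l, a0 ≤ k → k < I → b0 ≤ l → l < J → rk m' k l < rk m k l := by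
  classical
  have hbottom : ∀ j ≤ r, rk m q j = rk m' q j := fun j hj => by
    rw [hm.rk_bottom hj, hm'.rk_bottom hj]
  have hright : ∀ i ≤ q, rk m i r = rk m' i r := fun i hi => by
    rw [hm.rk_right hi, hm'.rk_right hi]
  obtain ⟨ha0, hb0⟩ := hm.mem_of_pos h0
  simp only [Finset.mem_Icc] at ha0 hb0
  have ha0q : a0 < q := lt_of_le_of_ne ha0.2 fun h => by
    have := hbottom b0 hb0.2
    subst h
    omega
  have hb0r : b0 < r := lt_of_le_of_ne hb0.2 fun h => by
    have := hright a0 ha0.2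
    subst h
    omega
  have hI : ∃ i, a0 < i ∧ rk m i b0 = rk m' i b0 := ⟨q, ha0q, hbottom b0 hb0.2⟩
  obtain ⟨ha0I, hIeq⟩ := Nat.find_spec hI
  have hIq : Nat.find hI ≤ q := Nat.find_min' hI ⟨ha0q, hbottom b0 hb0.2⟩
  have hcol : ∀ k, a0 ≤ k → k < Nat.find hI → rk m' k b0 < rk m k b0 := fun k hk hkI => by
    rcases hk.eq_or_lt with rfl | hk
    · exact hlt
    · exact (hle k (by omega) b0 hb0.2).lt_of_ne fun h => Nat.find_min hI hkI ⟨hk, h.symm⟩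
  have hJ : ∃ j, b0 < j ∧ ∃ i, a0 ≤ i ∧ i < Nat.find hI ∧ rk m i j = rk m' i j :=
    ⟨r, hb0r, a0, le_rfl, ha0I, hright a0 ha0.2⟩
  obtain ⟨hb0J, i, hai, hiI, hiJ⟩ := Nat.find_spec hJ
  have hJr : Nat.find hJ ≤ r := Nat.find_min' hJ ⟨hb0r, a0, le_rfl, ha0I, hright a0 ha0.2⟩
  refine ⟨_, _, i, hai, hiI, hIq, hb0J, hJr, hIeq, hiJ, fun k l hk hkI hl hlJ => ?_⟩
  rcases hl.eq_or_lt with rfl | hl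
  · exact hcol k hk hkI
  · exact (hle k (by omega) l (by omega)).lt_of_ne fun h =>
      Nat.find_min hJ hlJ ⟨hl, k, hk, hkI, h.symm⟩

end transport

structure IsAdmissible (m m' : ℕ → ℕ → ℕ) (a0 b0 a1 b1 : ℕ) : Prop where
  lt_row : a0 < a1
  lt_col : b0 < b1
  pos_nw : 0 < m a0 b0
  pos_se : 0 < m a1 b1
  rk_lt : ∀ i j, a0 ≤ i → i < a1 → b0 ≤ j → j < b1 → rk m' i j < rk m i j

lemma exists_isAdmissible {q r : ℕ} {b c : ℕ → ℕ} {m m' : ℕ → ℕ → ℕ}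
    (hm : IsTransport q r b c m) (hm' : IsTransport q r b c m') (hle : RkLE q r m m')
    {a0 b0 : ℕ} (h0 : 0 < m a0 b0) (hlt : rk m' a0 b0 < rk m a0 b0) :
    ∃ a1 b1, IsAdmissible m m' a0 b0 a1 b1 := by
  obtain ⟨I, J, i, hai, hiI, hIq, hbJ, hJr, hIeq, hiJ, hblock⟩ :=
    exists_rk_lt_on_block hm hm' hle h0 hlt
  obtain ⟨a1, ha1, b1, hb1, h1⟩ := exists_pos_of_rk_lt hiI.le hbJ.le (hle I hIq J hJr)
    (hblock i b0 hai hiI le_rfl hbJ) hiJ hIeq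
  simp only [Finset.mem_Ioc] at ha1 hb1
  exact ⟨a1, b1, by omega, by omega, h0, h1,
    fun k l hk hka hl hlb => hblock k l hk (by omega) hl (by omega)⟩

namespace IsAdmissible

variable {m m' : ℕ → ℕ → ℕ} {a0 b0 a1 b1 : ℕ}

lemma exists_isSimpleMoveAt (h : IsAdmissible m m' a0 b0 a1 b1) :
    ∃ i0 j0 i1 j1, IsAdmissible m m' i0 j0 i1 j1 ∧
      IsSimpleMoveAt m (moveMat m i0 j0 i1 j1) i0 j0 i1 j1 := by
  induction hp : a1 - a0 + (b1 - b0) using Nat.strong_induction_on generalizing a0 b0 a1 b1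
    with
  | _ p ih =>
  by_cases hempty : ∀ i j : ℕ, a0 ≤ i → i ≤ a1 → b0 ≤ j → j ≤ b1 →
      (i, j) ≠ (a0, b0) → (i, j) ≠ (a1, b1) → (i, j) ≠ (a0, b1) → (i, j) ≠ (a1, b0) → m i j = 0
  · exact ⟨a0, b0, a1, b1, h, h.lt_row, h.lt_col, h.pos_nw, h.pos_se, hempty, rfl⟩
  push Not at hempty
  obtain ⟨i, j, hi0, hi1, hj0, hj1, n00, n11, n01, n10, hij⟩ := hempty
  simp only [ne_eq, Prod.mk.injEq, not_and_or] at n00 n11 n01 n10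
  by_cases hnw : i < a1 ∧ j < b1
  · exact ih _ (by omega) ⟨hnw.1, hnw.2, Nat.pos_of_ne_zero hij, h.pos_se,
      fun k l hk hka hl hlb => h.rk_lt k l (by omega) hka (by omega) hlb⟩ rfl
  by_cases hse : a0 < i ∧ b0 < j
  · exact ih _ (by omega) ⟨hse.1, hse.2, h.pos_nw, Nat.pos_of_ne_zero hij,
      fun k l hk hka hl hlb => h.rk_lt k l hk (by omega) hl (by omega)⟩ rfl
  have := h.lt_row
  have := h.lt_col
  omega

lemma rkLE_moveMat {q r : ℕ} (h : IsAdmissible m m' a0 b0 a1 b1) (hle : RkLE q r m m')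
    (ha0 : 1 ≤ a0) (hb0 : 1 ≤ b0) : RkLE q r (moveMat m a0 b0 a1 b1) m' := by
  intro i hi j hj
  have hmove := rk_moveMat_add ha0 hb0 h.lt_row h.lt_col h.pos_nw h.pos_se i j
  have := hle i hi j hj
  split_ifs at hmove with hin
  · have := h.rk_lt i j hin.1 hin.2.1 hin.2.2.1 hin.2.2.2
    omega
  · omega

end IsAdmissible

theorem exists_simple_move_of_rkLE_general (q r : ℕ) (b c : ℕ → ℕ)
    (m m' : ℕ → ℕ → ℕ) (hm : IsTransport q r b c m) (hm' : IsTransport q r b c m')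
    (hle : RkLE q r m m') (hne : m ≠ m') :
    ∃ (i0 j0 i1 j1 : ℕ) (mt : ℕ → ℕ → ℕ),
      1 ≤ i0 ∧ i1 ≤ q ∧ 1 ≤ j0 ∧ j1 ≤ r ∧
      IsTransport q r b c mt ∧ IsSimpleMoveAt m mt i0 j0 i1 j1 ∧ RkLE q r mt m' := by
  obtain ⟨a0, b0, h0, hlt⟩ := exists_pos_rk_lt_of_ne hm hm' hle hne
  obtain ⟨a1, b1, hadm⟩ := exists_isAdmissible hm hm' hle h0 hlt
  obtain ⟨i0, j0, i1, j1, hadm, hmove⟩ := hadm.exists_isSimpleMoveAt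
  obtain ⟨hi0, hj0⟩ := hm.mem_of_pos hadm.pos_nw
  obtain ⟨hi1, hj1⟩ := hm.mem_of_pos hadm.pos_se
  have hi0' := (Finset.mem_Icc.1 hi0).1
  have hj0' := (Finset.mem_Icc.1 hj0).1
  exact ⟨i0, j0, i1, j1, _, hi0', (Finset.mem_Icc.1 hi1).2, hj0', (Finset.mem_Icc.1 hj1).2,
    hm.moveMat hi0 hi1 hj0 hj1 hadm.lt_row.ne hadm.lt_col.ne hadm.pos_nw hadm.pos_se, hmove,
    hadm.rkLE_moveMat hle hi0' hj0'⟩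

/-- if `M ≤rk M'` and `M ≠ M'`, then some simple move `M →_R M̃`
satisfies `M̃ ≤rk M'`. -/
theorem exists_simple_move_of_rkLE (n q r : ℕ) (hn : 0 < n) (hq : 0 < q) (hr : 0 < r)
    (b c : ℕ → ℕ) (hb : IsComposition n q b) (hc : IsComposition n r c)
    (m m' : ℕ → ℕ → ℕ) (hm : IsTransport q r b c m) (hm' : IsTransport q r b c m')
    (hle : RkLE q r m m') (hne : m ≠ m') :
    ∃ (i0 j0 i1 j1 : ℕ) (mt : ℕ → ℕ → ℕ),
      1 ≤ i0 ∧ i1 ≤ q ∧ 1 ≤ j0 ∧ j1 ≤ r ∧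
      IsTransport q r b c mt ∧ IsSimpleMoveAt m mt i0 j0 i1 j1 ∧ RkLE q r mt m' :=
  exists_simple_move_of_rkLE_general q r b c m m' hm hm' hle hne

end TwoFlagsLine
end
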